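/- Let p ∈ (0,1), q = 1 - p, and f(x) = x q (1 - e^{-q x}) e^{-p x} + x p (1 - e^{-p x}) e^{-q x} for x > 0. Then ∫₀^∞ f(x) x^{-2} dx = -q ln p - p ln q. -/

import Mathlib

open MeasureTheory Set Real

lemma exp_sub_exp_bound {a b x : ℝ} (hab : a ≤ b) (hx : 0 < x) :
    0 ≤ exp (-(a * x)) - exp (-(b * x)) ∧
    (exp (-(a * x)) - exp (-(b * x))) / x ≤ (b - a) * exp (-(a * x)) := by
  have h1 : exp (-(b * x)) = exp (-(a * x)) * exp (-((b - a) * x)) := by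
    rw [← exp_add]; ring_nf
  have h2 : -((b-a)*x) + 1 ≤ exp (-((b-a)*x)) := Real.add_one_le_exp _
  have h3 : exp (-((b-a)*x)) ≤ 1 := exp_le_one_iff.mpr (by nlinarith)
  constructor
  · nlinarith [exp_pos (-(a*x))]
  · rw [div_le_iff₀ hx]
    nlinarith [exp_pos (-(a*x))]

lemma frullani_integrable {a b : ℝ} (ha : 0 < a) (hab : a ≤ b) :
    IntegrableOn (fun x => (exp (-(a * x)) - exp (-(b * x))) / x) (Ioi (0:ℝ)) := by
  have hmeas : AEStronglyMeasurable (fun x => (exp (-(a * x)) - exp (-(b * x))) / x)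
      (volume.restrict (Ioi (0:ℝ))) := by
    refine ContinuousOn.aestronglyMeasurable ?_ measurableSet_Ioi
    apply ContinuousOn.div (by fun_prop) continuousOn_id
    intro x hx; exact ne_of_gt hx
  refine Integrable.mono' (((exp_neg_integrableOn_Ioi 0 ha)).const_mul (b - a)) hmeas ?_
  filter_upwards [ae_restrict_mem measurableSet_Ioi] with x hx
  obtain ⟨h0, hle⟩ := exp_sub_exp_bound hab hx
  rw [Real.norm_eq_abs, abs_of_nonneg (div_nonneg h0 hx.le)]
  simpa [neg_mul] using hle

lemma exp_Ioi (t : ℝ) (ht : 0 < t) :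
    ∫ x in Ioi (0:ℝ), exp (-(t * x)) = 1 / t := by
  have h := integral_comp_mul_left_Ioi (fun x => exp (-x)) 0 ht
  simp only [mul_zero, integral_exp_neg_Ioi, neg_zero, exp_zero, smul_eq_mul, mul_one] at h
  rw [h, one_div]

lemma inner_int (x a b : ℝ) (hx : 0 < x) :
    ∫ t in a..b, exp (-(t * x)) = (exp (-(a * x)) - exp (-(b * x))) / x := by
  have key : ∀ t : ℝ, HasDerivAt (fun t => -exp (-(t * x)) / x) (exp (-(t * x))) t := by
    intro t
    have := (((hasDerivAt_id t).mul_const x).neg.exp).neg.div_const x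
    convert this using 1
    · rfl
    · rfl
    · rfl
    · simp only [Pi.neg_apply, id]
      field_simp
  rw [intervalIntegral.integral_eq_sub_of_hasDerivAt (fun t _ => key t)
    (Continuous.intervalIntegrable (by continuity) a b)]
  field_simp
  ring

lemma frullani {a b : ℝ} (ha : 0 < a) (hab : a ≤ b) :
    ∫ x in Ioi (0:ℝ), (exp (-(a * x)) - exp (-(b * x))) / x = Real.log b - Real.log a := by
  have hcont : Continuous (fun z : ℝ × ℝ => exp (-(z.2 * z.1))) := by fun_prop
  have hprod : Integrable (Function.uncurry fun x t => exp (-(t * x)))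
      ((volume.restrict (Ioi (0:ℝ))).prod (volume.restrict (Ioc a b))) := by
    have hmeas : AEStronglyMeasurable (Function.uncurry fun x t => exp (-(t * x)))
        ((volume.restrict (Ioi (0:ℝ))).prod (volume.restrict (Ioc a b))) :=
      hcont.aestronglyMeasurable
    rw [integrable_prod_iff hmeas]
    constructor
    · refine ae_of_all _ fun x => ?_
      exact Continuous.integrableOn_Ioc (by fun_prop)
    · have hm2 : AEStronglyMeasurable
          (fun x => ∫ t in Ioc a b, ‖exp (-(t * x))‖) (volume.restrict (Ioi (0:ℝ))) := by
        exact (hcont.norm.aestronglyMeasurable).integral_prod_right'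
      refine Integrable.mono' (((exp_neg_integrableOn_Ioi 0 ha)).const_mul (b - a)) hm2 ?_
      filter_upwards [ae_restrict_mem measurableSet_Ioi] with x hx
      have hnn : 0 ≤ ∫ t in Ioc a b, ‖exp (-(t * x))‖ :=
        integral_nonneg fun t => norm_nonneg _
      simp only [Function.uncurry]
      rw [Real.norm_eq_abs, abs_of_nonneg hnn]
      have hle : ∫ t in Ioc a b, ‖exp (-(t * x))‖ ≤ ∫ _t in Ioc a b, exp (-(a * x)) := by
        refine setIntegral_mono_on (Continuous.integrableOn_Ioc (by fun_prop))
          (integrableOn_const measure_Ioc_lt_top.ne) measurableSet_Ioc ?_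
        intro t ht
        rw [Real.norm_eq_abs, abs_of_pos (exp_pos _)]
        exact exp_le_exp.mpr (by nlinarith [ht.1, mem_Ioi.mp hx])
      calc ∫ t in Ioc a b, ‖exp (-(t * x))‖ ≤ ∫ _t in Ioc a b, exp (-(a * x)) := hle
        _ = (b - a) * exp (-a * x) := by
            rw [setIntegral_const, Real.volume_real_Ioc_of_le hab, smul_eq_mul,
              neg_mul]
  have swap := integral_integral_swap hprod
  have step1 : ∫ x in Ioi (0:ℝ), (exp (-(a * x)) - exp (-(b * x))) / x
      = ∫ x in Ioi (0:ℝ), ∫ t in Ioc a b, exp (-(t * x)) := by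
    refine setIntegral_congr_fun measurableSet_Ioi fun x hx => ?_
    rw [← intervalIntegral.integral_of_le hab, inner_int x a b hx]
  have step2 : ∫ t in Ioc a b, ∫ x in Ioi (0:ℝ), exp (-(t * x)) = ∫ t in Ioc a b, 1 / t := by
    refine setIntegral_congr_fun measurableSet_Ioc fun t ht => ?_
    exact exp_Ioi t (ha.trans ht.1)
  rw [step1, swap, step2, ← intervalIntegral.integral_of_le hab,
    integral_one_div (by intro h; rw [Set.mem_uIcc] at h; rcases h with h | h <;> linarith),
    Real.log_div (by linarith) (by linarith)]

theorem stmt_7 (p q : ℝ) (hp : p ∈ Set.Ioo (0:ℝ) 1) (hq : q = 1 - p) :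
    ∫ x in Set.Ioi (0:ℝ),
        (x * q * (1 - Real.exp (-(q * x))) * Real.exp (-(p * x))
          + x * p * (1 - Real.exp (-(p * x))) * Real.exp (-(q * x))) * x^(-2 : ℝ)
      = -q * Real.log p - p * Real.log q := by
  obtain ⟨hp0, hp1⟩ := hp
  have hq0 : 0 < q := by rw [hq]; linarith
  have hq1 : q ≤ 1 := by rw [hq]; linarith
  have step1 : ∫ x in Set.Ioi (0:ℝ),
        (x * q * (1 - Real.exp (-(q * x))) * Real.exp (-(p * x))
          + x * p * (1 - Real.exp (-(p * x))) * Real.exp (-(q * x))) * x^(-2 : ℝ)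
      = ∫ x in Set.Ioi (0:ℝ),
        (q * ((exp (-(p * x)) - exp (-(1 * x))) / x)
          + p * ((exp (-(q * x)) - exp (-(1 * x))) / x)) := by
    refine setIntegral_congr_fun measurableSet_Ioi fun x hx => ?_
    have hx0 : (0:ℝ) < x := hx
    have hr : x ^ (-2 : ℝ) = (x * x)⁻¹ := by
      rw [show (-2:ℝ) = ((-2:ℤ):ℝ) by norm_num, Real.rpow_intCast]
      rw [zpow_neg, zpow_two]
    have hexp : exp (-(1 * x)) = exp (-(p * x)) * exp (-(q * x)) := by
      rw [← exp_add]; rw [hq]; ring_nf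
    rw [hr, hexp]
    field_simp
  rw [step1, integral_add ((frullani_integrable hp0 hp1.le).const_mul q)
      ((frullani_integrable hq0 hq1).const_mul p),
    MeasureTheory.integral_const_mul, MeasureTheory.integral_const_mul, frullani hp0 hp1.le, frullani hq0 hq1]
  simp [Real.log_one]
  ring
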